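/- Define f(γ) := (g(q-γ) + hp - 2γgh) / ((q-γ)p - γ²gh) for constants g, h ≥ 1, p = (g-1)γ_2 + 1 with 0 ≤ γ_2 ≤ 1, q ≥ 1. Then f is monotonically decreasing on 0 ≤ γ ≤ (q-1)/h, provided h(gq + hp) - (q-1)g(1+2h) ≥ 0 and the denominator stays positive. -/
import Mathlib

set_option maxHeartbeats 1000000 in
/-- Key algebraic fact: the cross-multiplied numerator difference quotient is nonnegative. -/
lemma key_F (g h p q a b : ℝ) (hh : 1 ≤ h) (hp1 : 1 ≤ p) (hpg : p ≤ g) (hq : 1 ≤ q)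
    (hgr : g * (q - 1) ≤ h) (hc2 : 0 ≤ 2 * g * h - g * (q - 1) - h * p)
    (ha : 0 ≤ a) (hab : a ≤ b) (hb : h * b ≤ q - 1) :
    (g * q + h * p) * p + (g * q + h * p) * (g * h * (a + b)) ≤
      (g * (1 + 2 * h)) * (q * p + g * h * a * b) := by
  have hg1 : (1:ℝ) ≤ g := le_trans hp1 hpg
  have hh0 : (0:ℝ) < h := by linarith
  have hg0 : (0:ℝ) < g := by linarith
  have hp0 : (0:ℝ) < p := by linarith
  have hr : (0:ℝ) ≤ q - 1 := by linarith
  have hb0 : (0:ℝ) ≤ b := le_trans ha hab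
  set A := g * q + h * p with hA
  set B := g * (1 + 2 * h) with hB
  have hA0 : (0:ℝ) < A := by rw [hA]; nlinarith
  have hB0 : (0:ℝ) < B := by rw [hB]; nlinarith
  have hgp : g * (q - 1) ≤ p * h := by nlinarith
  -- vertex fact L1c : p*h*(2gq-p) ≥ A*g*(q-1)
  have L1c : 0 ≤ p * h * (2 * g * q - p) - A * g * (q - 1) := by
    rw [hA]
    nlinarith [mul_nonneg hg0.le (sub_nonneg.2 hgp),
      mul_nonneg (mul_nonneg hg0.le hr) (sub_nonneg.2 hgp),
      mul_nonneg (mul_nonneg hp0.le hh0.le) (sub_nonneg.2 hpg)]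
  have L1 : 0 ≤ p * h ^ 2 * (2 * g * q - p) - A * g * h * (q - 1) := by
    nlinarith [mul_nonneg hh0.le L1c]
  -- vertex fact L2 : equals (2gh-g(q-1)-hp)(hp-g(q-1)) ≥ 0
  have hpr : 0 ≤ h * p - g * (q - 1) := by nlinarith
  have L2 : 0 ≤ p * h ^ 2 * (2 * g * q - p) + g * B * (q - 1) ^ 2
      - 2 * A * g * h * (q - 1) := by
    rw [hA, hB]; nlinarith [mul_nonneg hc2 hpr]
  -- goal * h is nonneg
  have hF : 0 ≤ h * ((B * (q * p + g * h * a * b)) - A * p - A * (g * h * (a + b))) := by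
    have hcc : p * h ^ 2 * (2 * g * q - p) = h * (B * (q * p) - A * p) := by
      rw [hA, hB]; ring
    rcases le_or_gt (B * b) A with hcb | hcb
    · -- a ↦ b direction nonneg
      have P1 : 0 ≤ g * h ^ 2 * (b - a) * (A - B * b) :=
        mul_nonneg (mul_nonneg (by positivity) (sub_nonneg.2 hab)) (sub_nonneg.2 hcb)
      have hBw : B * (h * b) ≤ A * h := by nlinarith [mul_le_mul_of_nonneg_left hcb hh0.le]
      rcases le_or_gt (B * (q - 1)) (A * h) with hc2' | hc2'
      · -- φ decreasing on [w, q-1]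
        have P2a : 0 ≤ g * ((q - 1) - h * b) * (A * h - B * (h * b)) :=
          mul_nonneg (mul_nonneg hg0.le (by linarith)) (by linarith)
        have P2b : 0 ≤ g * ((q - 1) - h * b) * (A * h - B * (q - 1)) :=
          mul_nonneg (mul_nonneg hg0.le (by linarith)) (by linarith)
        nlinarith [L2, P1, P2a, P2b]
      · -- interior minimum certificate: B*c ≥ g*(A*h)^2
        have hAh1 : A * h ≤ B * (q - 1) := hc2'.le
        have hAh2 : A * h ≤ (1 + 2 * h) * h * g := by
          have : B * (q - 1) ≤ (1 + 2 * h) * h * g := by rw [hB]; nlinarith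
          linarith
        have I1 : 0 ≤ p * h * (2 * g * q - p) - (1 + 2 * h) * g * (q - 1) := by
          nlinarith [mul_nonneg (mul_nonneg hp0.le hh0.le) (sub_nonneg.2 hpg),
            mul_nonneg (mul_nonneg (mul_nonneg hg0.le hh0.le) hr) (sub_nonneg.2 hp1)]
        have L3 : 0 ≤ B * (p * h ^ 2 * (2 * g * q - p)) - g * (A * h) ^ 2 := by
          have hsq : (A * h) ^ 2 ≤ (B * (q - 1)) * ((1 + 2 * h) * h * g) := by
            nlinarith [mul_nonneg hA0.le hh0.le]
          have : g * (A * h) ^ 2 ≤ g * ((B * (q - 1)) * ((1 + 2 * h) * h * g)) := by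
            nlinarith [hg0]
          rw [hB] at *
          nlinarith [mul_nonneg (mul_nonneg (mul_nonneg hg0.le hg0.le)
            (mul_nonneg hh0.le hh0.le)) I1, mul_nonneg (mul_nonneg (mul_nonneg
            (mul_nonneg hg0.le hg0.le) (mul_nonneg hh0.le hh0.le)) hh0.le) I1]
        -- B * hφ(w) = B*c + g*(B*w - A*h)^2 - g*(A*h)^2 ≥ 0
        nlinarith [L3, sq_nonneg (B * (h * b) - A * h), P1, hB0, hg0,
          mul_pos hB0 hh0]
    · -- coefficient of a is positive : F ≥ F(0,b) ≥ L1
      have P : 0 ≤ g * h ^ 2 * a * (B * b - A) :=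
        mul_nonneg (mul_nonneg (by positivity) ha) (sub_nonneg.2 hcb.le)
      have Q : 0 ≤ A * g * h * ((q - 1) - h * b) :=
        mul_nonneg (by positivity) (by linarith)
      nlinarith [L1, P, Q]
  nlinarith [hF, hh0]

/-- the function
`f(γ) = (g(q-γ) + hp - 2γgh) / ((q-γ)p - γ²gh)`
is monotonically decreasing on `0 ≤ γ ≤ (q-1)/h` under the compatibility conditions
of Lemma 3.9 of the paper (and positivity of the denominator on that interval). -/
theorem f_antitone (g h : ℕ) (hg : 1 ≤ g) (hh : 1 ≤ h) (γ₂ p q : ℝ)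
    (hp : p = ((g : ℝ) - 1) * γ₂ + 1) (hγ₂0 : 0 ≤ γ₂) (hγ₂1 : γ₂ ≤ 1) (hq : 1 ≤ q)
    (hcomp₁ : (g : ℝ) * h * γ₂ ≤ p * h - g * (q - 1))
    (hcomp₂ : 0 ≤ 2 * (g : ℝ) * h - g * (q - 1) - h * p)
    (hapex : 0 ≤ (h : ℝ) * (g * q + h * p) - (q - 1) * g * (1 + 2 * h))
    (hden : ∀ γ ∈ Set.Icc (0 : ℝ) ((q - 1) / h), 0 < (q - γ) * p - γ ^ 2 * g * h) :
    AntitoneOn (fun γ : ℝ =>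
        ((g : ℝ) * (q - γ) + h * p - 2 * γ * g * h) / ((q - γ) * p - γ ^ 2 * g * h))
      (Set.Icc (0 : ℝ) ((q - 1) / h)) := by
  have hg1 : (1:ℝ) ≤ g := by exact_mod_cast hg
  have hh1 : (1:ℝ) ≤ h := by exact_mod_cast hh
  have hh0 : (0:ℝ) < h := by linarith
  have hp1 : (1:ℝ) ≤ p := by nlinarith
  have hpg : p ≤ (g:ℝ) := by nlinarith
  have hgr : (g:ℝ) * (q - 1) ≤ h := by nlinarith
  intro a ha b hb hab
  have hDa := hden a ha
  have hDb := hden b hb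
  obtain ⟨ha0, ha1⟩ := ha
  obtain ⟨hb0, hb1⟩ := hb
  have hbq : (h:ℝ) * b ≤ q - 1 := by
    have := (le_div_iff₀ hh0).mp hb1; linarith
  have hK := key_F (g:ℝ) (h:ℝ) p q a b hh1 hp1 hpg hq hgr hcomp₂ ha0 hab hbq
  simp only
  rw [div_le_div_iff₀ hDb hDa]
  nlinarith [mul_nonneg (sub_nonneg.2 hab) (sub_nonneg.2 hK)]
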